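/- Let Ω ⊂ ℝ^d be a bounded domain with Lebesgue measure, let F satisfy (A1)–(A3), let u : Ω → [0,∞) be integrable with F(u) ∈ L¹(Ω), and let 0 < τ with ατ < 2. If v̂ is a minimizer of the Fisher–Rao JKO functional G(v) = ∫_Ω F(v) dx + (2/τ) ∫_Ω (√v − √u)² dx over nonnegative measurable v with F(v) ∈ L¹(Ω), then the sets {u > 0} and {v̂ > 0} coincide up to Lebesgue-null sets; that is, v̂ = 0 a.e. on {u = 0} and u = 0 a.e. on {v̂ = 0}. -/

import Mathlib

/-!
Compare the minimiser `v̂` with competitors that differ from it on a single set. Replacing `v̂` by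
`0` on `{u = 0}` changes the energy by at most `(α - 2/τ) ∫_{u = 0} v̂`, since `F 0 - F s ≤ α s`,
and `ατ < 2` makes this negative unless `v̂ = 0` a.e. there. Replacing `v̂` by `t² u` on
`{v̂ = 0}` changes it by at most `B t² - (4/τ) t ∫_{v̂ = 0} u` for a constant `B` (convexity gives
`F (t² s) - F 0 ≤ t² (F s - F 0)`), which is negative for small `t > 0` unless
`∫_{v̂ = 0} u = 0`. The superlinear growth of `F` makes `v̂` integrable, so that the energy is the
integral of a pointwise density and the comparisons can be made pointwise.
-/

open Real Set MeasureTheory Filter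

def FRAdm (d : ℕ) (Ω : Set (Fin d → ℝ)) (F : ℝ → ℝ) (v : (Fin d → ℝ) → ℝ) : Prop :=
  Measurable v ∧ (∀ x, 0 ≤ v x) ∧ MeasureTheory.IntegrableOn (fun x => F (v x)) Ω

noncomputable def FRJKO (d : ℕ) (Ω : Set (Fin d → ℝ)) (F : ℝ → ℝ) (τ : ℝ)
    (u v : (Fin d → ℝ) → ℝ) : ℝ :=
  (∫ x in Ω, F (v x)) + (2 / τ) * ∫ x in Ω, (Real.sqrt (v x) - Real.sqrt (u x)) ^ 2

section RealFacts

variable {f : ℝ → ℝ}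

theorem convexOn_Ici_of_deriv2_pos (hc : ContinuousOn f (Ici 0))
    (h2 : ContDiffOn ℝ 2 f (Ioi 0)) (hpos : ∀ s, 0 < s → 0 < deriv (deriv f) s) :
    ConvexOn ℝ (Ici 0) f := by
  have hmono : MonotoneOn (deriv f) (Ioi 0) :=
    (strictMonoOn_of_deriv_pos (convex_Ioi 0)
      (h2.continuousOn_deriv_of_isOpen isOpen_Ioi one_le_two)
      (fun s hs => hpos s (interior_subset hs))).monotoneOn
  rw [← interior_Ici] at hmono
  exact hmono.convexOn_of_deriv (convex_Ici 0) hc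
    (by rw [interior_Ici]; exact h2.differentiableOn two_ne_zero)

theorem exists_le_abs_add_of_rpow_le_deriv {α β r : ℝ} (hc : ContinuousOn f (Ici 0))
    (hd : DifferentiableOn ℝ f (Ioi 0)) (hβ : 0 < β) (hr : 1 < r)
    (hderiv : ∀ s, 0 < s → β * s ^ (r - 1) - α ≤ deriv f s) :
    ∃ K, ∀ s, 0 ≤ s → s ≤ |f s| + K := by
  have hlim : Tendsto (fun s : ℝ => β * s ^ (r - 1) - α) atTop atTop :=
    tendsto_atTop_add_const_right _ _ ((tendsto_rpow_atTop (by linarith)).const_mul_atTop hβ)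
  obtain ⟨s₀, hs₀⟩ := eventually_atTop.1 ((hlim.eventually_ge_atTop 1).and (eventually_ge_atTop 0))
  have hs₀0 := (hs₀ s₀ le_rfl).2
  refine ⟨|f s₀| + s₀, fun s hs => ?_⟩
  rcases le_or_gt s s₀ with hle | hlt
  · linarith [abs_nonneg (f s), abs_nonneg (f s₀)]
  · have hslope := (convex_Ici s₀).mul_sub_le_image_sub_of_le_deriv
      (hc.mono (Ici_subset_Ici.2 (by linarith)))
      (hd.mono (by rw [interior_Ici]; exact Ioi_subset_Ioi (by linarith)))
      (C := 1) (fun x hx => by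
        rw [interior_Ici] at hx
        exact (hs₀ x hx.out.le).1.trans (hderiv x (by linarith [hx.out])))
      s₀ self_mem_Ici s hlt.le hlt.le
    linarith [le_abs_self (f s), neg_abs_le (f s₀)]

theorem ConvexOn.apply_mul_le (hf : ConvexOn ℝ (Ici 0) f) {c s : ℝ} (hc0 : 0 ≤ c)
    (hc1 : c ≤ 1) (hs : 0 ≤ s) : f (c * s) ≤ (1 - c) * f 0 + c * f s := by
  simpa using hf.2 self_mem_Ici (mem_Ici.2 hs) (sub_nonneg.2 hc1) hc0 (sub_add_cancel 1 c)

theorem exists_sq_mul_sub_mul_neg {a : ℝ} (ha : 0 < a) (b : ℝ) :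
    ∃ t : ℝ, 0 ≤ t ∧ t ≤ 1 ∧ t ^ 2 * b - t * a < 0 := by
  set t := min 1 (a / (2 * (|b| + 1)))
  have ht0 : 0 < t := lt_min one_pos (by positivity)
  have hta : t * (|b| + 1) ≤ a / 2 := by
    calc t * (|b| + 1) ≤ a / (2 * (|b| + 1)) * (|b| + 1) := by gcongr; exact min_le_right _ _
      _ = a / 2 := by field_simp
  refine ⟨t, ht0.le, min_le_left _ _, ?_⟩
  nlinarith [le_abs_self b, mul_le_mul_of_nonneg_left hta ht0.le]

end RealFacts

section Measure

variable {X : Type*} [MeasurableSpace X] {μ : Measure X}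

theorem ContinuousOn.measurable_comp_of_nonneg {F : ℝ → ℝ} (hF : ContinuousOn F (Ici 0))
    {g : X → ℝ} (hg : Measurable g) (hg0 : ∀ x, 0 ≤ g x) : Measurable fun x => F (g x) := by
  have hcont : Continuous fun t => F (max t 0) :=
    hF.comp_continuous (by fun_prop) fun t => le_max_right t 0
  convert hcont.measurable.comp hg using 2 with x
  simp [max_eq_left (hg0 x)]

theorem Integrable.of_le_abs_comp_add [IsFiniteMeasure μ] {F : ℝ → ℝ} {K : ℝ}
    (hF : ∀ s, 0 ≤ s → s ≤ |F s| + K) {g : X → ℝ} (hg : Measurable g) (hg0 : ∀ x, 0 ≤ g x)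
    (hFg : Integrable (fun x => F (g x)) μ) : Integrable g μ :=
  (hFg.abs.add (integrable_const K)).mono' hg.aestronglyMeasurable
    (ae_of_all _ fun x => by
      rw [Real.norm_eq_abs, abs_of_nonneg (hg0 x)]; exact hF _ (hg0 x))

theorem Integrable.sqrt_sub_sqrt_sq {u v : X → ℝ} (hu : Measurable u) (hv : Measurable v)
    (hu0 : ∀ x, 0 ≤ u x) (hv0 : ∀ x, 0 ≤ v x) (huI : Integrable u μ) (hvI : Integrable v μ) :
    Integrable (fun x => (√(v x) - √(u x)) ^ 2) μ :=
  (hvI.add huI).mono' (by fun_prop) (ae_of_all _ fun x => by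
    rw [Real.norm_eq_abs, abs_of_nonneg (sq_nonneg _), Pi.add_apply]
    nlinarith [Real.sq_sqrt (hu0 x), Real.sq_sqrt (hv0 x), Real.sqrt_nonneg (u x),
      Real.sqrt_nonneg (v x), mul_nonneg (Real.sqrt_nonneg (u x)) (Real.sqrt_nonneg (v x))])

theorem ae_eq_zero_of_setIntegral_nonpos {S : Set X} (hS : MeasurableSet S) {f : X → ℝ}
    (hf0 : ∀ x, 0 ≤ f x) (hfI : IntegrableOn f S μ) (h : ∫ x in S, f x ∂μ ≤ 0) :
    ∀ᵐ x ∂μ, x ∈ S → f x = 0 :=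
  (ae_restrict_iff' hS).1 <| (setIntegral_eq_zero_iff_of_nonneg_ae (ae_of_all _ hf0) hfI).1
    (le_antisymm h (integral_nonneg hf0))

end Measure

noncomputable def frjkoIntegrand (F : ℝ → ℝ) (τ u v : ℝ) : ℝ := F v + 2 / τ * (√v - √u) ^ 2

theorem frjkoIntegrand_zero_sub_le {F : ℝ → ℝ} {τ α s : ℝ} (hF : F 0 - α * s ≤ F s)
    (hs : 0 ≤ s) : frjkoIntegrand F τ 0 0 - frjkoIntegrand F τ 0 s ≤ (α - 2 / τ) * s := by
  simp only [frjkoIntegrand, Real.sqrt_zero, sub_zero, Real.sq_sqrt hs]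
  linarith

theorem frjkoIntegrand_sq_mul_sub_le {F : ℝ → ℝ} (hF : ConvexOn ℝ (Ici 0) F) {τ t s : ℝ}
    (ht0 : 0 ≤ t) (ht1 : t ≤ 1) (hs : 0 ≤ s) :
    frjkoIntegrand F τ s (t ^ 2 * s) - frjkoIntegrand F τ s 0 ≤
      t ^ 2 * (F s - F 0 + 2 / τ * s) - t * (4 / τ * s) := by
  have hconv := hF.apply_mul_le (sq_nonneg t) (by nlinarith) hs
  have hsqrt : √(t ^ 2 * s) = t * √s := by rw [Real.sqrt_mul (sq_nonneg t), Real.sqrt_sq ht0]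
  simp only [frjkoIntegrand, hsqrt, Real.sqrt_zero, zero_sub, neg_sq]
  rw [show (t * √s - √s) ^ 2 = (t - 1) ^ 2 * √s ^ 2 by ring, Real.sq_sqrt hs]
  linear_combination hconv

section FRJKO

variable {d : ℕ} {Ω : Set (Fin d → ℝ)} {F : ℝ → ℝ} {τ : ℝ} {u v g : (Fin d → ℝ) → ℝ}

theorem FRAdm.piecewise {S : Set (Fin d → ℝ)} [DecidablePred (· ∈ S)] (hS : MeasurableSet S)
    (hg : FRAdm d Ω F g) (hv : FRAdm d Ω F v) : FRAdm d Ω F (S.piecewise g v) := by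
  refine ⟨hg.1.piecewise hS hv.1, fun x => ?_, ?_⟩
  · by_cases hx : x ∈ S <;> simp [hx, hg.2.1 x, hv.2.1 x]
  · have hcomp : (fun x => F (S.piecewise g v x)) =
        S.piecewise (fun x => F (g x)) (fun x => F (v x)) :=
      funext fun x => S.apply_piecewise g v (fun _ => F)
    rw [hcomp]
    exact Integrable.piecewise hS hg.2.2.integrableOn hv.2.2.integrableOn

theorem FRAdm.const_mul [IsFiniteMeasure (volume.restrict Ω)] {α c : ℝ}
    (hFc : ContinuousOn F (Ici 0)) (hconv : ConvexOn ℝ (Ici 0) F)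
    (hF : ∀ s, 0 ≤ s → F 0 - α * s ≤ F s) (hu : FRAdm d Ω F u) (huI : IntegrableOn u Ω)
    (hc0 : 0 ≤ c) (hc1 : c ≤ 1) : FRAdm d Ω F (fun x => c * u x) := by
  have hcu : ∀ x, 0 ≤ c * u x := fun x => mul_nonneg hc0 (hu.2.1 x)
  refine ⟨hu.1.const_mul c, hcu, integrable_of_le_of_le
    (hFc.measurable_comp_of_nonneg (hu.1.const_mul c) hcu).aestronglyMeasurable
    (ae_of_all _ fun x => hF _ (hcu x))
    (ae_of_all _ fun x => hconv.apply_mul_le hc0 hc1 (hu.2.1 x))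
    ((integrable_const _).sub ((huI.const_mul c).const_mul α))
    ((integrable_const _).add (hu.2.2.const_mul c))⟩

theorem FRAdm.integrableOn_frjkoIntegrand (hum : Measurable u) (hu0 : ∀ x, 0 ≤ u x)
    (huI : IntegrableOn u Ω) (hv : FRAdm d Ω F v) (hvI : IntegrableOn v Ω) :
    IntegrableOn (fun x => frjkoIntegrand F τ (u x) (v x)) Ω :=
  hv.2.2.add ((Integrable.sqrt_sub_sqrt_sq hum hv.1 hu0 hv.2.1 huI hvI).const_mul _)

theorem FRAdm.FRJKO_eq_integral (hum : Measurable u) (hu0 : ∀ x, 0 ≤ u x)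
    (huI : IntegrableOn u Ω) (hv : FRAdm d Ω F v) (hvI : IntegrableOn v Ω) :
    FRJKO d Ω F τ u v = ∫ x in Ω, frjkoIntegrand F τ (u x) (v x) := by
  rw [FRJKO, ← integral_const_mul, ← integral_add hv.2.2
    ((Integrable.sqrt_sub_sqrt_sq hum hv.1 hu0 hv.2.1 huI hvI).const_mul _)]
  rfl

theorem setIntegral_frjkoIntegrand_sub_nonneg (hum : Measurable u) (hu0 : ∀ x, 0 ≤ u x)
    (huI : IntegrableOn u Ω) (hv : FRAdm d Ω F v) (hvI : IntegrableOn v Ω)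
    (hmin : ∀ w, FRAdm d Ω F w → FRJKO d Ω F τ u v ≤ FRJKO d Ω F τ u w)
    {S : Set (Fin d → ℝ)} (hS : MeasurableSet S) (hg : FRAdm d Ω F g) (hgI : IntegrableOn g Ω) :
    0 ≤ ∫ x in S, frjkoIntegrand F τ (u x) (g x) - frjkoIntegrand F τ (u x) (v x)
      ∂(volume.restrict Ω) := by
  classical
  set w := S.piecewise g v
  have hw : FRAdm d Ω F w := hg.piecewise hS hv
  have hwI : IntegrableOn w Ω := Integrable.piecewise hS hgI.integrableOn hvI.integrableOn
  calc 0 ≤ FRJKO d Ω F τ u w - FRJKO d Ω F τ u v := sub_nonneg.2 (hmin w hw)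
    _ = ∫ x in Ω, frjkoIntegrand F τ (u x) (w x) - frjkoIntegrand F τ (u x) (v x) := by
      rw [hw.FRJKO_eq_integral hum hu0 huI hwI, hv.FRJKO_eq_integral hum hu0 huI hvI,
        integral_sub (hw.integrableOn_frjkoIntegrand hum hu0 huI hwI)
          (hv.integrableOn_frjkoIntegrand hum hu0 huI hvI)]
    _ = ∫ x in S, frjkoIntegrand F τ (u x) (w x) - frjkoIntegrand F τ (u x) (v x)
        ∂(volume.restrict Ω) :=
      (setIntegral_eq_integral_of_forall_compl_eq_zero fun x hx => by simp [w, hx]).symm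
    _ = _ := setIntegral_congr_fun hS fun x hx => by simp [w, hx]

end FRJKO

section FRJKOMinimizer

variable {d : ℕ} {Ω : Set (Fin d → ℝ)} {F : ℝ → ℝ} {τ α : ℝ} {u v : (Fin d → ℝ) → ℝ}

theorem ae_minimizer_eq_zero_of_eq_zero [IsFiniteMeasure (volume.restrict Ω)]
    (hF : ∀ s, 0 ≤ s → F 0 - α * s ≤ F s) (hτ : 0 < τ) (hατ : α * τ < 2)
    (hum : Measurable u) (hu0 : ∀ x, 0 ≤ u x) (huI : IntegrableOn u Ω)
    (hv : FRAdm d Ω F v) (hvI : IntegrableOn v Ω)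
    (hmin : ∀ w, FRAdm d Ω F w → FRJKO d Ω F τ u v ≤ FRJKO d Ω F τ u w) :
    ∀ᵐ x ∂(volume.restrict Ω), u x = 0 → v x = 0 := by
  set S := {x | u x = 0}
  have hS : MeasurableSet S := hum (measurableSet_singleton 0)
  have h0 : FRAdm d Ω F 0 := ⟨measurable_const, fun _ => le_rfl, integrable_const (F 0)⟩
  have hgain := setIntegral_frjkoIntegrand_sub_nonneg hum hu0 huI hv hvI hmin hS h0
    (integrable_const 0)
  have hcoef : 0 < 2 / τ - α := by rw [sub_pos, lt_div_iff₀ hτ]; linarith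
  have hloss : (2 / τ - α) * ∫ x in S, v x ∂(volume.restrict Ω) ≤ 0 := by
    calc (2 / τ - α) * ∫ x in S, v x ∂(volume.restrict Ω)
        = -∫ x in S, (α - 2 / τ) * v x ∂(volume.restrict Ω) := by
          rw [integral_const_mul]; ring
      _ ≤ -∫ x in S, frjkoIntegrand F τ (u x) 0 - frjkoIntegrand F τ (u x) (v x)
          ∂(volume.restrict Ω) := by
        refine neg_le_neg (setIntegral_mono_on ?_ (hvI.integrableOn.const_mul _) hS
          fun x hx => ?_)
        · exact ((h0.integrableOn_frjkoIntegrand hum hu0 huI (integrable_const 0)).sub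
            (hv.integrableOn_frjkoIntegrand hum hu0 huI hvI)).integrableOn
        · rw [show u x = 0 from hx]
          exact frjkoIntegrand_zero_sub_le (hF _ (hv.2.1 x)) (hv.2.1 x)
      _ ≤ 0 := neg_nonpos.2 hgain
  exact ae_eq_zero_of_setIntegral_nonpos hS hv.2.1 hvI.integrableOn
    (nonpos_of_mul_nonpos_right hloss hcoef)

theorem ae_eq_zero_of_minimizer_eq_zero [IsFiniteMeasure (volume.restrict Ω)]
    (hFc : ContinuousOn F (Ici 0)) (hconv : ConvexOn ℝ (Ici 0) F)
    (hF : ∀ s, 0 ≤ s → F 0 - α * s ≤ F s) (hτ : 0 < τ)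
    (hu : FRAdm d Ω F u) (huI : IntegrableOn u Ω) (hv : FRAdm d Ω F v) (hvI : IntegrableOn v Ω)
    (hmin : ∀ w, FRAdm d Ω F w → FRJKO d Ω F τ u v ≤ FRJKO d Ω F τ u w) :
    ∀ᵐ x ∂(volume.restrict Ω), v x = 0 → u x = 0 := by
  set S := {x | v x = 0}
  have hS : MeasurableSet S := hv.1 (measurableSet_singleton 0)
  refine ae_eq_zero_of_setIntegral_nonpos hS hu.2.1 huI.integrableOn (not_lt.1 fun hpos => ?_)
  set B := ∫ x in S, F (u x) - F 0 + 2 / τ * u x ∂(volume.restrict Ω)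
  obtain ⟨t, ht0, ht1, hneg⟩ := exists_sq_mul_sub_mul_neg
    (a := 4 / τ * ∫ x in S, u x ∂(volume.restrict Ω)) (by positivity) B
  have hg := hu.const_mul hFc hconv hF huI (sq_nonneg t) (pow_le_one₀ ht0 ht1)
  have hgain := setIntegral_frjkoIntegrand_sub_nonneg hu.1 hu.2.1 huI hv hvI hmin hS hg
    (huI.const_mul _)
  have hBI : IntegrableOn (fun x => F (u x) - F 0 + 2 / τ * u x) S (volume.restrict Ω) :=
    ((hu.2.2.sub (integrable_const _)).add (huI.const_mul _)).integrableOn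
  have hloss : ∫ x in S, frjkoIntegrand F τ (u x) (t ^ 2 * u x) -
      frjkoIntegrand F τ (u x) (v x) ∂(volume.restrict Ω) ≤
      t ^ 2 * B - t * (4 / τ * ∫ x in S, u x ∂(volume.restrict Ω)) := by
    calc _ ≤ ∫ x in S, t ^ 2 * (F (u x) - F 0 + 2 / τ * u x) - t * (4 / τ * u x)
          ∂(volume.restrict Ω) := by
          refine setIntegral_mono_on ?_ ((hBI.const_mul _).sub
            ((huI.integrableOn.const_mul _).const_mul _)) hS fun x hx => ?_
          · exact ((hg.integrableOn_frjkoIntegrand hu.1 hu.2.1 huI (huI.const_mul _)).sub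
              (hv.integrableOn_frjkoIntegrand hu.1 hu.2.1 huI hvI)).integrableOn
          · rw [show v x = 0 from hx]
            exact frjkoIntegrand_sq_mul_sub_le hconv ht0 ht1 (hu.2.1 x)
      _ = _ := by
        rw [integral_sub (hBI.const_mul _) ((huI.integrableOn.const_mul _).const_mul _),
          integral_const_mul, integral_const_mul, integral_const_mul]
  linarith

end FRJKOMinimizer

theorem stmt10_general (d : ℕ) (Ω : Set (Fin d → ℝ)) (hΩb : Bornology.IsBounded Ω)
    (F : ℝ → ℝ) (α β r : ℝ) (hβ : 0 < β) (hr : 1 < r)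
    (hF1 : ContDiffOn ℝ 1 F (Set.Ici 0)) (hF2 : ContDiffOn ℝ 2 F (Set.Ioi 0))
    (hF'' : ∀ s : ℝ, 0 < s → 0 < deriv (deriv F) s)
    (hFlow : ∀ s : ℝ, 0 < s → β * s ^ (r - 1) - α ≤ deriv F s)
    (τ : ℝ) (hτ : 0 < τ) (hατ : α * τ < 2)
    (u : (Fin d → ℝ) → ℝ) (hu0 : ∀ x, 0 ≤ u x) (hum : Measurable u)
    (huI : IntegrableOn u Ω) (huF : IntegrableOn (fun x => F (u x)) Ω)
    (vhat : (Fin d → ℝ) → ℝ) (hvA : FRAdm d Ω F vhat)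
    (hvmin : ∀ w, FRAdm d Ω F w → FRJKO d Ω F τ u vhat ≤ FRJKO d Ω F τ u w) :
    (∀ᵐ x ∂(volume.restrict Ω), u x = 0 → vhat x = 0) ∧
    (∀ᵐ x ∂(volume.restrict Ω), vhat x = 0 → u x = 0) := by
  have : IsFiniteMeasure (volume.restrict Ω) :=
    isFiniteMeasure_restrict.2 hΩb.measure_lt_top.ne
  have hFc : ContinuousOn F (Ici 0) := hF1.continuousOn
  have hFd : DifferentiableOn ℝ F (Ioi 0) := hF2.differentiableOn two_ne_zero
  have hlin : ∀ s, 0 ≤ s → F 0 - α * s ≤ F s := fun s hs => by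
    have := (convex_Ici 0).mul_sub_le_image_sub_of_le_deriv hFc (by rwa [interior_Ici])
      (C := -α) (fun x hx => by
        rw [interior_Ici] at hx
        linarith [hFlow x hx, mul_nonneg hβ.le (Real.rpow_nonneg hx.out.le (r - 1))])
      0 self_mem_Ici s hs hs
    linarith
  obtain ⟨K, hK⟩ := exists_le_abs_add_of_rpow_le_deriv hFc hFd hβ hr hFlow
  have hvI : IntegrableOn vhat Ω := Integrable.of_le_abs_comp_add hK hvA.1 hvA.2.1 hvA.2.2
  exact ⟨ae_minimizer_eq_zero_of_eq_zero hlin hτ hατ hum hu0 huI hvA hvI hvmin,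
    ae_eq_zero_of_minimizer_eq_zero hFc (convexOn_Ici_of_deriv2_pos hFc hF2 hF'') hlin hτ
      ⟨hum, hu0, huF⟩ huI hvA hvI hvmin⟩

/-- the Fisher–Rao JKO step preserves the support: the sets `{u > 0}` and
`{v̂ > 0}` coincide up to Lebesgue-null sets. -/
theorem stmt10 (d : ℕ) (Ω : Set (Fin d → ℝ)) (hΩo : IsOpen Ω) (hΩb : Bornology.IsBounded Ω)
    (F : ℝ → ℝ) (α β r : ℝ) (hα : 0 ≤ α) (hβ : 0 < β) (hr : 1 < r)
    (hF1 : ContDiffOn ℝ 1 F (Set.Ici 0)) (hF2 : ContDiffOn ℝ 2 F (Set.Ioi 0))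
    (hF'' : ∀ s : ℝ, 0 < s → 0 < deriv (deriv F) s)
    (hFlow : ∀ s : ℝ, 0 < s → β * s ^ (r - 1) - α ≤ deriv F s)
    (hA3 : ∀ M : ℝ, 0 < M → ∀ w : (Fin d → ℝ) → ℝ, (∀ x, 0 ≤ w x) →
      IntegrableOn w Ω → IntegrableOn (fun x => F (w x)) Ω →
      IntegrableOn (fun x => deriv F (M * w x) * w x) Ω)
    (τ : ℝ) (hτ : 0 < τ) (hατ : α * τ < 2)
    (u : (Fin d → ℝ) → ℝ) (hu0 : ∀ x, 0 ≤ u x) (hum : Measurable u)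
    (huI : IntegrableOn u Ω) (huF : IntegrableOn (fun x => F (u x)) Ω)
    (vhat : (Fin d → ℝ) → ℝ) (hvA : FRAdm d Ω F vhat)
    (hvmin : ∀ w, FRAdm d Ω F w → FRJKO d Ω F τ u vhat ≤ FRJKO d Ω F τ u w) :
    (∀ᵐ x ∂(volume.restrict Ω), u x = 0 → vhat x = 0) ∧
    (∀ᵐ x ∂(volume.restrict Ω), vhat x = 0 → u x = 0) :=
  stmt10_general d Ω hΩb F α β r hβ hr hF1 hF2 hF'' hFlow τ hτ hατ u hu0 hum huI huF vhat hvA hvmin
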